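/- arXiv:1511.05328 — 3 statements merged into one kernel-verified Lean document; each statement's English description precedes it below -/
import Mathlib

section
/- Bounds on the piecewise delays. Let h > 0, r₀, r₁ ≥ 0, η_M ≥ 0, μ_M ≥ 0, and let 0 = s₀ < s₁ < s₂ < … with s_{k+1} − s_k ≤ h, ξ_k = s_k + r₀ + η_k with 0 ≤ η_k ≤ η_M, t_k = ξ_k + r₁ + μ_k with 0 ≤ μ_k ≤ μ_M and t_k ≤ t_{k+1}. Let t ≥ 0 and suppose t ∈ [t_k, t_{k+1}) and t ∈ [t_j − μ_j, t_{j+1} − μ_{j+1}) for some j, k ∈ ℤ₊ (so that τ₂(t) = t − s_k and τ₁(t) = t − s_j). Then r₀ + r₁ ≤ t − s_j ≤ t − s_k ≤ r₀ + r₁ + h + η_M + μ_M; i.e., r₀ + r₁ ≤ τ₁(t) ≤ τ₂(t) ≤ τ_M where τ_M = r₀ + r₁ + h + η_M + μ_M. -/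
/-! The outer bounds are linear arithmetic in `t_j = s_j + r₀ + η_j + r₁ + μ_j` and in
`t_{k+1}`; the middle one reduces to `k ≤ j`, which holds because
`t_k ≤ t < t_{j+1} - μ_{j+1} ≤ t_{j+1}` and the update times are monotone. -/

theorem Monotone.le_of_apply_le_of_lt_succ {α : Type*} [LinearOrder α] {f g : ℕ → α}
    (hf : Monotone f) (hgf : ∀ n, g n ≤ f n) {t : α} {j k : ℕ}
    (hk : f k ≤ t) (hj : t < g (j + 1)) : k ≤ j :=
  Nat.lt_succ_iff.mp <| hf.reflect_lt <| (hk.trans_lt hj).trans_le (hgf _)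

theorem piecewise_delay_bounds_general
    (h r₀ r₁ ηM μM : ℝ)
    (s η μ : ℕ → ℝ) (hsmono : StrictMono s)
    (hstep : ∀ k, s (k + 1) - s k ≤ h)
    (hη : ∀ k, 0 ≤ η k ∧ η k ≤ ηM) (hμ : ∀ k, 0 ≤ μ k ∧ μ k ≤ μM)
    (ξ tt : ℕ → ℝ) (hξ : ∀ k, ξ k = s k + r₀ + η k) (htt : ∀ k, tt k = ξ k + r₁ + μ k)
    (httmono : ∀ k, tt k ≤ tt (k + 1))
    (t : ℝ) (j k : ℕ)
    (htk : t ∈ Set.Ico (tt k) (tt (k + 1)))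
    (htj : t ∈ Set.Ico (tt j - μ j) (tt (j + 1) - μ (j + 1))) :
    r₀ + r₁ ≤ t - s j ∧ t - s j ≤ t - s k ∧ t - s k ≤ r₀ + r₁ + h + ηM + μM := by
  have htt_eq : ∀ n, tt n = s n + r₀ + η n + r₁ + μ n := fun n => by rw [htt, hξ]
  have hkj : k ≤ j :=
    (monotone_nat_of_le_succ httmono).le_of_apply_le_of_lt_succ
      (fun n => sub_le_self _ (hμ n).1) htk.1 htj.2
  refine ⟨?_, by linarith [hsmono.monotone hkj], ?_⟩
  · linarith [htj.1, htt_eq j, (hη j).1]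
  · linarith [htk.2, htt_eq (k + 1), hstep k, (hη (k + 1)).2, (hμ (k + 1)).2]

/-- **Bounds on the piecewise delays.**  With sampling instants `s k`
(`s 0 = 0`, `s (k+1) - s k ≤ h`), controller updating times `ξ k = s k + r₀ + η k`
(`0 ≤ η k ≤ η_M`), actuator updating times `t k = ξ k + r₁ + μ k` (`0 ≤ μ k ≤ μ_M`,
`t k ≤ t (k+1)`): if `t ≥ 0`, `t ∈ [t k, t (k+1))` and `t ∈ [t j - μ j, t (j+1) - μ (j+1))`
(so that `τ₂ t = t - s k` and `τ₁ t = t - s j`), then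
`r₀ + r₁ ≤ t - s j ≤ t - s k ≤ r₀ + r₁ + h + η_M + μ_M`. -/
theorem piecewise_delay_bounds
    (h r₀ r₁ ηM μM : ℝ) (hh : 0 < h) (hr₀ : 0 ≤ r₀) (hr₁ : 0 ≤ r₁)
    (hηM : 0 ≤ ηM) (hμM : 0 ≤ μM)
    (s η μ : ℕ → ℝ) (hs0 : s 0 = 0) (hsmono : StrictMono s)
    (hstep : ∀ k, s (k + 1) - s k ≤ h)
    (hη : ∀ k, 0 ≤ η k ∧ η k ≤ ηM) (hμ : ∀ k, 0 ≤ μ k ∧ μ k ≤ μM)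
    (ξ tt : ℕ → ℝ) (hξ : ∀ k, ξ k = s k + r₀ + η k) (htt : ∀ k, tt k = ξ k + r₁ + μ k)
    (httmono : ∀ k, tt k ≤ tt (k + 1))
    (t : ℝ) (ht : 0 ≤ t) (j k : ℕ)
    (htk : t ∈ Set.Ico (tt k) (tt (k + 1)))
    (htj : t ∈ Set.Ico (tt j - μ j) (tt (j + 1) - μ (j + 1))) :
    r₀ + r₁ ≤ t - s j ∧ t - s j ≤ t - s k ∧ t - s k ≤ r₀ + r₁ + h + ηM + μM :=
  piecewise_delay_bounds_general h r₀ r₁ ηM μM s η μ hsmono hstep hη hμ ξ tt hξ htt httmono t j k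
    htk htj
end

section
/- Exponential decay transfers from the predictor variable to the state (Appendix B). Let A be a real n×n matrix, B a real n×m matrix, K a real m×n matrix, r₀, r₁ ≥ 0, τ̄ ≥ 0, α > 0, M > 0. Let z : ℝ → ℝⁿ be measurable with z(t) = 0 for t < 0 and |z(t)| ≤ M e^{−αt} |z(0)| for all t ≥ 0, and let τ : ℝ → [0, τ̄] be measurable. Define x(t) = e^{−A(r₀+r₁)}z(t) − ∫_{t−r₁}^{t+r₀} e^{A(t−r₁−θ)}BK z(θ − r₀ − τ(θ − r₀)) dθ for t ≥ 0. Then there exists a constant C > 0, depending only on A, B, K, r₀, r₁, τ̄, α, M, such that |x(t)| ≤ C e^{−αt} |z(0)| for all t ≥ 0. -/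
/-!
Both terms of `x t` are estimated with the ℓ² operator norm of matrices. The kernel
`e^{A(t-r₁-θ)} B K` ranges over a compact set of matrices as `θ` runs over `[t - r₁, t + r₀]`,
so it is uniformly bounded. The delayed argument `θ - r₀ - τ(θ - r₀)` is at least
`t - (r₀ + r₁ + τ̄)`, and since `z` vanishes on negative times, the decay of `z` survives the
delay at the price of the factor `e^{α(r₀ + r₁ + τ̄)}`.
-/

open Matrix MeasureTheory

/-- The Euclidean norm on `Fin n → ℝ`. -/
noncomputable def euclNorm (n : ℕ) (v : Fin n → ℝ) : ℝ :=
  ‖(EuclideanSpace.equiv (Fin n) ℝ).symm v‖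

open scoped Matrix.Norms.L2Operator

theorem ContinuousLinearEquiv.intervalIntegral_comp_comm {𝕜 E F : Type*} [RCLike 𝕜]
    [NormedAddCommGroup E] [NormedSpace 𝕜 E] [NormedSpace ℝ E]
    [NormedAddCommGroup F] [NormedSpace 𝕜 F] [NormedSpace ℝ F]
    (L : E ≃L[𝕜] F) (f : ℝ → E) {a b : ℝ} {μ : Measure ℝ} :
    ∫ x in a..b, L (f x) ∂μ = L (∫ x in a..b, f x ∂μ) := by
  simp_rw [intervalIntegral, L.integral_comp_comm, L.map_sub]

lemma euclNorm_nonneg (n : ℕ) (v : Fin n → ℝ) : 0 ≤ euclNorm n v := norm_nonneg _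

lemma euclNorm_sub_le (n : ℕ) (v w : Fin n → ℝ) :
    euclNorm n (v - w) ≤ euclNorm n v + euclNorm n w := by
  simpa only [euclNorm, map_sub] using norm_sub_le _ _

lemma euclNorm_mulVec_le {k l : ℕ} (P : Matrix (Fin k) (Fin l) ℝ) (v : Fin l → ℝ) :
    euclNorm k (P *ᵥ v) ≤ ‖P‖ * euclNorm l v :=
  P.l2_opNorm_mulVec _

lemma euclNorm_intervalIntegral_le_of_le_const {n : ℕ} {f : ℝ → Fin n → ℝ} {a b C : ℝ}
    (h : ∀ x ∈ Set.uIoc a b, euclNorm n (f x) ≤ C) :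
    euclNorm n (∫ x in a..b, f x) ≤ C * |b - a| := by
  rw [euclNorm, ← ContinuousLinearEquiv.intervalIntegral_comp_comm]
  exact intervalIntegral.norm_integral_le_of_norm_le_const h

theorem Matrix.continuous_exp_smul {ι : Type*} [Fintype ι] [DecidableEq ι] (A : Matrix ι ι ℝ) :
    Continuous fun s : ℝ => NormedSpace.exp (s • A) :=
  continuous_iff_continuousAt.2 fun t => (hasDerivAt_exp_smul_const A t).continuousAt

lemma norm_le_of_exp_decay_of_sub_le {E : Type*} [SeminormedAddCommGroup E] {z : ℝ → E}
    {α M c : ℝ} (hα : 0 ≤ α) (hM : 0 ≤ M) (hc : 0 ≤ c) (hneg : ∀ s < 0, z s = 0)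
    (hdecay : ∀ s ≥ 0, ‖z s‖ ≤ M * Real.exp (-α * s) * c) {h t s : ℝ} (hs : t - h ≤ s) :
    ‖z s‖ ≤ M * Real.exp (α * h) * Real.exp (-α * t) * c := by
  rcases lt_or_ge s 0 with hs0 | hs0
  · rw [hneg s hs0, norm_zero]
    positivity
  · calc ‖z s‖ ≤ M * Real.exp (-α * s) * c := hdecay s hs0
      _ ≤ M * Real.exp (α * h + -α * t) * c := by gcongr; nlinarith
      _ = M * Real.exp (α * h) * Real.exp (-α * t) * c := by rw [Real.exp_add]; ring

theorem decay_transfers_to_state_general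
    (n m : ℕ) (A : Matrix (Fin n) (Fin n) ℝ) (B : Matrix (Fin n) (Fin m) ℝ)
    (K : Matrix (Fin m) (Fin n) ℝ) (r₀ r₁ τb α M : ℝ)
    (hr₀ : 0 ≤ r₀) (hr₁ : 0 ≤ r₁) (hα : 0 < α) (hM : 0 < M) :
    ∃ C > (0 : ℝ), ∀ (z : ℝ → Fin n → ℝ) (τ : ℝ → ℝ),
      Measurable z → (∀ t < (0 : ℝ), z t = 0) →
      (∀ t ≥ (0 : ℝ), euclNorm n (z t) ≤ M * Real.exp (-α * t) * euclNorm n (z 0)) →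
      Measurable τ → (∀ θ : ℝ, τ θ ∈ Set.Icc 0 τb) →
      ∀ t ≥ (0 : ℝ),
        euclNorm n
            ((NormedSpace.exp ((-(r₀ + r₁)) • A)).mulVec (z t) -
              ∫ θ in (t - r₁)..(t + r₀),
                (NormedSpace.exp ((t - r₁ - θ) • A) * B * K).mulVec
                  (z (θ - r₀ - τ (θ - r₀)))) ≤
          C * Real.exp (-α * t) * euclNorm n (z 0) := by
  have hkernel : Continuous fun s : ℝ => NormedSpace.exp (s • A) * B * K :=
    (A.continuous_exp_smul.matrix_mul continuous_const).matrix_mul continuous_const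
  obtain ⟨c, hc⟩ := isCompact_Icc.exists_bound_of_continuousOn
    (s := Set.Icc (-(r₀ + r₁)) 0) hkernel.continuousOn
  have hc₀ : 0 ≤ c := (norm_nonneg _).trans (hc 0 ⟨by linarith, le_rfl⟩)
  set P := ‖NormedSpace.exp ((-(r₀ + r₁)) • A)‖
  set L := M * Real.exp (α * (r₀ + r₁ + τb))
  refine ⟨P * M + c * L * (r₀ + r₁) + 1, by positivity, fun z τ _ hneg hdecay _ hτ t ht => ?_⟩
  set Z₀ := euclNorm n (z 0)
  set D := Real.exp (-α * t)
  have hwindow : Set.uIoc (t - r₁) (t + r₀) = Set.Ioc (t - r₁) (t + r₀) :=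
    Set.uIoc_of_le (by linarith)
  have hdelayed : ∀ θ ∈ Set.Ioc (t - r₁) (t + r₀),
      euclNorm n (z (θ - r₀ - τ (θ - r₀))) ≤ L * D * Z₀ := fun θ hθ =>
    norm_le_of_exp_decay_of_sub_le (z := fun s => (EuclideanSpace.equiv (Fin n) ℝ).symm (z s))
      hα.le hM.le (euclNorm_nonneg n _) (fun s hs => by simp [hneg s hs]) hdecay
      (by linarith [(hτ (θ - r₀)).2, hθ.1])
  have hfirst : euclNorm n (NormedSpace.exp ((-(r₀ + r₁)) • A) *ᵥ z t) ≤ P * (M * D * Z₀) :=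
    (euclNorm_mulVec_le _ _).trans (by gcongr; exact hdecay t ht)
  have hintegral : euclNorm n (∫ θ in (t - r₁)..(t + r₀),
      (NormedSpace.exp ((t - r₁ - θ) • A) * B * K) *ᵥ z (θ - r₀ - τ (θ - r₀))) ≤
      c * (L * D * Z₀) * (r₀ + r₁) := by
    have hlength : |t + r₀ - (t - r₁)| = r₀ + r₁ := by rw [abs_of_nonneg (by linarith)]; ring
    rw [← hlength]
    refine euclNorm_intervalIntegral_le_of_le_const fun θ hθ => (euclNorm_mulVec_le _ _).trans ?_
    rw [hwindow] at hθ
    exact mul_le_mul (hc _ ⟨by linarith [hθ.2], by linarith [hθ.1]⟩) (hdelayed θ hθ)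
      (euclNorm_nonneg n _) hc₀
  calc _ ≤ P * (M * D * Z₀) + c * (L * D * Z₀) * (r₀ + r₁) :=
        (euclNorm_sub_le n _ _).trans (add_le_add hfirst hintegral)
    _ ≤ (P * M + c * L * (r₀ + r₁) + 1) * D * Z₀ := by
        linarith [mul_nonneg (Real.exp_pos (-α * t)).le (euclNorm_nonneg n (z 0))]

/-- **Exponential decay transfers from the predictor variable to the state.**
Let `A, B, K` be real matrices, `r₀, r₁ ≥ 0`, `τ̄ ≥ 0`, `α > 0`, `M > 0`.  There is a
constant `C > 0` (depending only on `A, B, K, r₀, r₁, τ̄, α, M`) such that for every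
measurable `z : ℝ → ℝⁿ` with `z t = 0` for `t < 0` and `|z t| ≤ M exp (-αt) |z 0|` for
`t ≥ 0`, and every measurable `τ : ℝ → [0, τ̄]`, the function
`x t = e^{-A(r₀+r₁)} z t - ∫ θ in (t-r₁)..(t+r₀), e^{A(t-r₁-θ)} B K z (θ - r₀ - τ (θ - r₀)) dθ`
satisfies `|x t| ≤ C exp (-αt) |z 0|` for all `t ≥ 0`. -/
theorem decay_transfers_to_state
    (n m : ℕ) (A : Matrix (Fin n) (Fin n) ℝ) (B : Matrix (Fin n) (Fin m) ℝ)
    (K : Matrix (Fin m) (Fin n) ℝ) (r₀ r₁ τb α M : ℝ)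
    (hr₀ : 0 ≤ r₀) (hr₁ : 0 ≤ r₁) (hτb : 0 ≤ τb) (hα : 0 < α) (hM : 0 < M) :
    ∃ C > (0 : ℝ), ∀ (z : ℝ → Fin n → ℝ) (τ : ℝ → ℝ),
      Measurable z → (∀ t < (0 : ℝ), z t = 0) →
      (∀ t ≥ (0 : ℝ), euclNorm n (z t) ≤ M * Real.exp (-α * t) * euclNorm n (z 0)) →
      Measurable τ → (∀ θ : ℝ, τ θ ∈ Set.Icc 0 τb) →
      ∀ t ≥ (0 : ℝ),
        euclNorm n
            ((NormedSpace.exp ((-(r₀ + r₁)) • A)).mulVec (z t) -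
              ∫ θ in (t - r₁)..(t + r₀),
                (NormedSpace.exp ((t - r₁ - θ) • A) * B * K).mulVec
                  (z (θ - r₀ - τ (θ - r₀)))) ≤
          C * Real.exp (-α * t) * euclNorm n (z 0) :=
  decay_transfers_to_state_general n m A B K r₀ r₁ τb α M hr₀ hr₁ hα hM
end

section
/- Exponentially weighted Jensen–Park inequality. Let R be a symmetric positive semidefinite n×n real matrix and G an n×n real matrix such that the 2n×2n block matrix [[R, G],[Gᵀ, R]] is positive semidefinite. Let α ≥ 0, τ̄ > 0, t ∈ ℝ, τ ∈ [0, τ̄], and let z : [t − τ̄, t] → ℝⁿ be continuously differentiable. Set v₁ = z(t) − z(t − τ) and v₂ = z(t − τ) − z(t − τ̄). Then τ̄ ∫_{t−τ̄}^{t} e^{2α(s−t)} ż(s)ᵀ R ż(s) ds ≥ e^{−2ατ̄} (v₁ᵀR v₁ + 2 v₁ᵀG v₂ + v₂ᵀR v₂). -/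
/-!
Jensen's inequality for the convex quadratic form `x ↦ xᵀ R x`, combined with the fundamental
theorem of calculus, bounds `v₁ᵀ R v₁` and `v₂ᵀ R v₂` by the length of the corresponding
subinterval times the integral of `żᵀ R ż` over it. Positive semidefiniteness of
`[[R, G], [Gᵀ, R]]` makes the `2 × 2` form `[[v₁ᵀ R v₁, v₁ᵀ G v₂], [v₁ᵀ G v₂, v₂ᵀ R v₂]]`
positive semidefinite, which is what Park's reciprocally convex combination needs to absorb the
cross term. Finally, the weight `exp (2α(s - t))` is at least `exp (-2ατ̄)` on `[t - τ̄, t]`.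
-/

open Matrix MeasureTheory

namespace Matrix.PosSemidef

variable {ι : Type*} [Fintype ι] {R : Matrix ι ι ℝ}

theorem convexOn_dotProduct_mulVec (hR : R.PosSemidef) :
    ConvexOn ℝ Set.univ fun x : ι → ℝ => x ⬝ᵥ R *ᵥ x := by
  refine ⟨convex_univ, fun x _ y _ a b ha hb hab => ?_⟩
  obtain rfl : b = 1 - a := by linarith
  have gap : a * (x ⬝ᵥ R *ᵥ x) + (1 - a) * (y ⬝ᵥ R *ᵥ y)
      - (a • x + (1 - a) • y) ⬝ᵥ R *ᵥ (a • x + (1 - a) • y)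
      = a * (1 - a) * ((x - y) ⬝ᵥ R *ᵥ (x - y)) := by
    simp only [mulVec_add, mulVec_sub, mulVec_smul, add_dotProduct, sub_dotProduct,
      dotProduct_add, dotProduct_sub, smul_dotProduct, dotProduct_smul, smul_eq_mul]
    ring
  have gap_nonneg := mul_nonneg (mul_nonneg ha hb) (hR.dotProduct_mulVec_nonneg (x - y))
  simp only [star_trivial, smul_eq_mul] at gap_nonneg ⊢
  linarith

theorem integral_dotProduct_mulVec_le (hR : R.PosSemidef) {f : ℝ → ι → ℝ} {a b : ℝ}
    (hab : a ≤ b) (hf : ContinuousOn f (Set.Icc a b)) :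
    (∫ s in a..b, f s) ⬝ᵥ R *ᵥ (∫ s in a..b, f s) ≤ (b - a) * ∫ s in a..b, f s ⬝ᵥ R *ᵥ f s := by
  rcases hab.eq_or_lt with rfl | hlt
  · simp
  have hQ : Continuous fun x : ι → ℝ => x ⬝ᵥ R *ᵥ x := by fun_prop
  have hsub : Set.uIoc a b ⊆ Set.Icc a b := Set.uIoc_of_le hab ▸ Set.Ioc_subset_Icc_self
  have jensen := hR.convexOn_dotProduct_mulVec.map_set_average_le (μ := volume)
    (t := Set.uIoc a b) hQ.continuousOn isClosed_univ (by simp [Set.uIoc_of_le hab, hlt])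
    (by simp [Set.uIoc_of_le hab])
    (by simp) (hf.integrableOn_Icc.mono_set hsub)
    ((hQ.comp_continuousOn hf).integrableOn_Icc.mono_set hsub)
  rw [interval_average_eq, interval_average_eq] at jensen
  simp only [mulVec_smul, smul_dotProduct, dotProduct_smul, smul_eq_mul] at jensen
  have hba : 0 < b - a := by linarith
  field_simp at jensen
  linarith

theorem dotProduct_mulVec_sub_le_integral (hR : R.PosSemidef) {z zd : ℝ → ι → ℝ} {a b : ℝ}
    (hab : a ≤ b) (hz : ∀ s ∈ Set.Icc a b, HasDerivAt z (zd s) s)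
    (hzd : ContinuousOn zd (Set.Icc a b)) :
    (z b - z a) ⬝ᵥ R *ᵥ (z b - z a) ≤ (b - a) * ∫ s in a..b, zd s ⬝ᵥ R *ᵥ zd s := by
  rw [← intervalIntegral.integral_eq_sub_of_hasDerivAt (by rwa [Set.uIcc_of_le hab])
    (hzd.intervalIntegrable_of_Icc hab)]
  exact hR.integral_dotProduct_mulVec_le hab hzd

theorem fromBlocks_two_mul_dotProduct_mulVec_le {A G D : Matrix ι ι ℝ}
    (hM : (fromBlocks A G Gᵀ D).PosSemidef) (x y : ι → ℝ) :
    2 * (x ⬝ᵥ G *ᵥ y) ≤ x ⬝ᵥ A *ᵥ x + y ⬝ᵥ D *ᵥ y := by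
  have h := hM.dotProduct_mulVec_nonneg (Sum.elim x (-y))
  simp only [star_trivial, fromBlocks_mulVec, Sum.elim_comp_inl, Sum.elim_comp_inr,
    sumElim_dotProduct_sumElim, mulVec_neg, dotProduct_add, neg_dotProduct,
    dotProduct_neg, dotProduct_transpose_mulVec] at h
  linarith

end Matrix.PosSemidef

theorem add_two_mul_add_le_of_reciprocally_convex {p g q a b A B : ℝ} (ha : 0 ≤ a) (hb : 0 ≤ b)
    (hA : 0 ≤ A) (hB : 0 ≤ B) (hpA : p ≤ a * A) (hqB : q ≤ b * B)
    (hpgq : ∀ x y : ℝ, 2 * (x * y) * g ≤ x ^ 2 * p + y ^ 2 * q) :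
    p + 2 * g + q ≤ (a + b) * (A + B) := by
  have hp : 0 ≤ p := by simpa using hpgq 1 0
  have hq : 0 ≤ q := by simpa using hpgq 0 1
  suffices cross : 2 * g ≤ b * A + a * B by linarith
  -- For `a = 0` we get `p = 0`, and a positive semidefinite `2 × 2` form with a zero diagonal
  -- entry has zero off-diagonal entry; symmetrically for `b = 0`.
  rcases ha.eq_or_lt with rfl | ha
  · have h := hpgq (q + 1) g
    obtain rfl : g = 0 := pow_eq_zero_iff two_ne_zero |>.mp (by nlinarith)
    nlinarith
  rcases hb.eq_or_lt with rfl | hb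
  · have h := hpgq g (p + 1)
    obtain rfl : g = 0 := pow_eq_zero_iff two_ne_zero |>.mp (by nlinarith)
    nlinarith
  have hba := hpgq b a
  refine le_of_mul_le_mul_left ?_ (mul_pos ha hb)
  nlinarith

theorem jensen_park {ι : Type*} [Fintype ι] {R G : Matrix ι ι ℝ} (hR : R.PosSemidef)
    (hRG : (fromBlocks R G Gᵀ R).PosSemidef) {a b c : ℝ} (hab : a ≤ b) (hbc : b ≤ c)
    {z zd : ℝ → ι → ℝ} (hz : ∀ s ∈ Set.Icc a c, HasDerivAt z (zd s) s)
    (hzd : ContinuousOn zd (Set.Icc a c)) :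
    (z c - z b) ⬝ᵥ R *ᵥ (z c - z b) + 2 * ((z c - z b) ⬝ᵥ G *ᵥ (z b - z a)) +
        (z b - z a) ⬝ᵥ R *ᵥ (z b - z a) ≤
      (c - a) * ∫ s in a..c, zd s ⬝ᵥ R *ᵥ zd s := by
  have hq : ContinuousOn (fun s => zd s ⬝ᵥ R *ᵥ zd s) (Set.Icc a c) := by fun_prop
  have hq0 (s : ℝ) : 0 ≤ zd s ⬝ᵥ R *ᵥ zd s := by simpa using hR.dotProduct_mulVec_nonneg (zd s)
  have hIab : Set.Icc a b ⊆ Set.Icc a c := Set.Icc_subset_Icc le_rfl hbc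
  have hIbc : Set.Icc b c ⊆ Set.Icc a c := Set.Icc_subset_Icc hab le_rfl
  rw [← intervalIntegral.integral_add_adjacent_intervals
      ((hq.mono hIab).intervalIntegrable_of_Icc hab) ((hq.mono hIbc).intervalIntegrable_of_Icc hbc),
    add_comm (∫ s in a..b, zd s ⬝ᵥ R *ᵥ zd s), show c - a = (c - b) + (b - a) by ring]
  refine add_two_mul_add_le_of_reciprocally_convex (sub_nonneg.2 hbc) (sub_nonneg.2 hab)
    (intervalIntegral.integral_nonneg hbc fun s _ => hq0 s)
    (intervalIntegral.integral_nonneg hab fun s _ => hq0 s)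
    (hR.dotProduct_mulVec_sub_le_integral hbc (fun s hs => hz s (hIbc hs)) (hzd.mono hIbc))
    (hR.dotProduct_mulVec_sub_le_integral hab (fun s hs => hz s (hIab hs)) (hzd.mono hIab))
    fun x y => ?_
  simpa [mulVec_smul, smul_dotProduct, dotProduct_smul, sq, mul_assoc, mul_left_comm] using
    hRG.fromBlocks_two_mul_dotProduct_mulVec_le (x • (z c - z b)) (y • (z b - z a))

theorem exp_weighted_jensen_park_general
    (n : ℕ) (R G : Matrix (Fin n) (Fin n) ℝ)
    (hR : R.PosSemidef) (hRG : (Matrix.fromBlocks R G Gᵀ R).PosSemidef)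
    (α τb t τ : ℝ) (hα : 0 ≤ α) (hτ : τ ∈ Set.Icc 0 τb)
    (z zd : ℝ → Fin n → ℝ)
    (hz : ∀ s ∈ Set.Icc (t - τb) t, HasDerivAt z (zd s) s)
    (hzd : ContinuousOn zd (Set.Icc (t - τb) t)) :
    Real.exp (-(2 * α * τb)) *
        ((z t - z (t - τ)) ⬝ᵥ R.mulVec (z t - z (t - τ)) +
          2 * ((z t - z (t - τ)) ⬝ᵥ G.mulVec (z (t - τ) - z (t - τb))) +
          (z (t - τ) - z (t - τb)) ⬝ᵥ R.mulVec (z (t - τ) - z (t - τb))) ≤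
      τb * ∫ s in (t - τb)..t, Real.exp (2 * α * (s - t)) * (zd s ⬝ᵥ R.mulVec (zd s)) := by
  obtain ⟨hτ0, hττb⟩ := hτ
  have hle : t - τb ≤ t := by linarith
  have hq : ContinuousOn (fun s => zd s ⬝ᵥ R *ᵥ zd s) (Set.Icc (t - τb) t) := by fun_prop
  have hjp := jensen_park hR hRG (b := t - τ) (by linarith) (by linarith) hz hzd
  rw [sub_sub_cancel] at hjp
  have weight : ∀ s ∈ Set.Icc (t - τb) t,
      Real.exp (-(2 * α * τb)) * (zd s ⬝ᵥ R *ᵥ zd s) ≤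
        Real.exp (2 * α * (s - t)) * (zd s ⬝ᵥ R *ᵥ zd s) := fun s hs =>
    mul_le_mul_of_nonneg_right (Real.exp_le_exp.2 (by nlinarith [hs.1]))
      (by simpa using hR.dotProduct_mulVec_nonneg (zd s))
  calc _ ≤ Real.exp (-(2 * α * τb)) * (τb * ∫ s in (t - τb)..t, zd s ⬝ᵥ R *ᵥ zd s) :=
        mul_le_mul_of_nonneg_left hjp (Real.exp_pos _).le
    _ = τb * ∫ s in (t - τb)..t, Real.exp (-(2 * α * τb)) * (zd s ⬝ᵥ R *ᵥ zd s) := by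
        rw [intervalIntegral.integral_const_mul]; ring
    _ ≤ _ := mul_le_mul_of_nonneg_left (intervalIntegral.integral_mono_on hle
        ((hq.intervalIntegrable_of_Icc hle).const_mul _)
        ((by fun_prop : ContinuousOn _ _).intervalIntegrable_of_Icc hle) weight) (by linarith)

/-- **Exponentially weighted Jensen–Park inequality.**  Let `R` be a symmetric positive
semidefinite `n×n` real matrix and `G` an `n×n` real matrix such that the block matrix
`[[R, G], [Gᵀ, R]]` is positive semidefinite.  Let `α ≥ 0`, `τ̄ > 0`, `t ∈ ℝ`,
`τ ∈ [0, τ̄]`, and let `z : [t - τ̄, t] → ℝⁿ` be continuously differentiable with derivative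
`zd`.  With `v₁ = z t - z (t - τ)` and `v₂ = z (t - τ) - z (t - τ̄)`,
`τ̄ ∫ s in (t-τ̄)..t, exp (2α(s-t)) ⟨zd s, R zd s⟩ ≥ exp (-2ατ̄) (⟨v₁, R v₁⟩ + 2⟨v₁, G v₂⟩ + ⟨v₂, R v₂⟩)`. -/
theorem exp_weighted_jensen_park
    (n : ℕ) (R G : Matrix (Fin n) (Fin n) ℝ)
    (hR : R.PosSemidef) (hRG : (Matrix.fromBlocks R G Gᵀ R).PosSemidef)
    (α τb t τ : ℝ) (hα : 0 ≤ α) (hτb : 0 < τb) (hτ : τ ∈ Set.Icc 0 τb)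
    (z zd : ℝ → Fin n → ℝ)
    (hz : ∀ s ∈ Set.Icc (t - τb) t, HasDerivAt z (zd s) s)
    (hzd : ContinuousOn zd (Set.Icc (t - τb) t)) :
    Real.exp (-(2 * α * τb)) *
        ((z t - z (t - τ)) ⬝ᵥ R.mulVec (z t - z (t - τ)) +
          2 * ((z t - z (t - τ)) ⬝ᵥ G.mulVec (z (t - τ) - z (t - τb))) +
          (z (t - τ) - z (t - τb)) ⬝ᵥ R.mulVec (z (t - τ) - z (t - τb))) ≤
      τb * ∫ s in (t - τb)..t, Real.exp (2 * α * (s - t)) * (zd s ⬝ᵥ R.mulVec (zd s)) :=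
  exp_weighted_jensen_park_general n R G hR hRG α τb t τ hα hτ z zd hz hzd
end
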